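/- Let X be a Banach space and suppose (h₁,…,h_M, g₁,…,g_M) is a hypercyclic vector for the 2M-fold direct sum ⊕_{i=1}^{2M} T of a bounded operator T on X. Then for any positive integers k₁,…,k_M, the vector (T^{k₁}h₁,…,T^{k_M}h_M, g₁,…,g_M) is also a hypercyclic vector for ⊕_{i=1}^{2M} T. -/

import Mathlib

/-!
Applying `T ^ (k i)` to the `i`-th of the first `M` coordinates and the identity to the others is
a continuous map with dense range that commutes with `⊕ T`, so it maps the dense orbit of
`(h, g)` onto the orbit of `(T^{k₁}h₁, …, T^{k_M}h_M, g)`, which is therefore dense. The range of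
`T` is dense because it contains the orbit of `h i` minus its first point, and a nontrivial
normed space has no isolated points.
-/

open Filter Topology

section Topology

variable {X : Type*} [TopologicalSpace X] {f : X → X}

theorem DenseRange.iterate (hf : DenseRange f) (hc : Continuous f) :
    ∀ n : ℕ, DenseRange f^[n]
  | 0 => denseRange_id
  | n + 1 => by
    rw [Function.iterate_succ']
    exact hf.comp (hf.iterate hc n) hc

theorem denseRange_of_denseRange_iterate_apply [T1Space X] [∀ x : X, NeBot (𝓝[≠] x)] {x : X}
    (hx : DenseRange fun n : ℕ => f^[n] x) : DenseRange f := by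
  refine (hx.sdiff_singleton x).mono ?_
  rintro _ ⟨⟨_ | n, rfl⟩, hne⟩
  · exact absurd rfl hne
  · exact ⟨f^[n] x, (Function.iterate_succ_apply' f n x).symm⟩

end Topology

theorem ContinuousLinearMap.denseRange_pow_of_denseRange_pow_apply {𝕜 E : Type*}
    [NontriviallyNormedField 𝕜] [NormedAddCommGroup E] [NormedSpace 𝕜 E] (T : E →L[𝕜] E) {x : E}
    (hx : DenseRange fun n : ℕ => (T ^ n) x) (m : ℕ) : DenseRange (T ^ m) := by
  rcases subsingleton_or_nontrivial E with hE | hE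
  · exact fun y => subset_closure ⟨0, Subsingleton.elim _ y⟩
  have := Module.punctured_nhds_neBot 𝕜 E
  simp only [FunLike.coe_pow_eq_iterate] at hx ⊢
  exact (denseRange_of_denseRange_iterate_apply hx).iterate T.continuous m

theorem stmt12_general {X : Type*} [NormedAddCommGroup X] [NormedSpace ℝ X]
    (T : X →L[ℝ] X) {M : ℕ} (h g : Fin M → X)
    (hd : Dense (Set.range fun n : ℕ =>
      ((fun i : Fin M => (T ^ n) (h i)), (fun i : Fin M => (T ^ n) (g i))))) :
    ∀ k : Fin M → ℕ, (∀ i, 0 < k i) →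
      Dense (Set.range fun n : ℕ =>
        ((fun i : Fin M => (T ^ n) ((T ^ (k i)) (h i))),
         (fun i : Fin M => (T ^ n) (g i)))) := by
  intro k _
  have hT : ∀ i, DenseRange (T ^ k i) := fun i =>
    have hproj : DenseRange fun p : (Fin M → X) × (Fin M → X) => p.1 i :=
      Function.Surjective.denseRange fun x => ⟨(fun _ => x, g), rfl⟩
    T.denseRange_pow_of_denseRange_pow_apply (hproj.comp hd (by fun_prop)) (k i)
  let A : (Fin M → X) × (Fin M → X) → (Fin M → X) × (Fin M → X) :=
    Prod.map (Pi.map fun i => ⇑(T ^ k i)) id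
  have hA : DenseRange A := (DenseRange.piMap hT).prodMap denseRange_id
  have hAc : Continuous A := by fun_prop
  have horbit : (fun n : ℕ => ((fun i => (T ^ n) ((T ^ k i) (h i))), fun i => (T ^ n) (g i))) =
      A ∘ fun n : ℕ => ((fun i => (T ^ n) (h i)), fun i => (T ^ n) (g i)) := by
    ext n i
    · exact DFunLike.congr_fun (Commute.pow_pow_self T n (k i)).eq (h i)
    · rfl
  rw [horbit]
  exact hA.comp hd hAc

/-- If `(h₁,…,h_M,g₁,…,g_M)` is hypercyclic for the `2M`-fold direct sum of `T`,
then so is `(T^{k₁}h₁,…,T^{k_M}h_M,g₁,…,g_M)` for any positive integers `k i`. -/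
theorem stmt12 {X : Type*} [NormedAddCommGroup X] [NormedSpace ℝ X] [CompleteSpace X]
    (T : X →L[ℝ] X) {M : ℕ} (h g : Fin M → X)
    (hd : Dense (Set.range fun n : ℕ =>
      ((fun i : Fin M => (T ^ n) (h i)), (fun i : Fin M => (T ^ n) (g i))))) :
    ∀ k : Fin M → ℕ, (∀ i, 0 < k i) →
      Dense (Set.range fun n : ℕ =>
        ((fun i : Fin M => (T ^ n) ((T ^ (k i)) (h i))),
         (fun i : Fin M => (T ^ n) (g i)))) :=
  stmt12_general T h g hd
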